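/- arXiv:2201.06685 — 3 statements merged into one kernel-verified Lean document; each statement's English description precedes it below -/
import Mathlib

section
/- Let E be a real inner product space, K a complete subspace of E with orthogonal projection P_K, and define for x ∈ E with P_K x ≠ 0 and x − P_K x ≠ 0 the signal-to-artifact ratio SAR(x) = 10·log₁₀(‖P_K x‖² / ‖x − P_K x‖²). Suppose y ∈ K, ŝ ∈ E with P_K ŝ ≠ 0 and ŝ − P_K ŝ ≠ 0, and ⟨ŝ, y⟩ > 0. Then for every ω > 0, SAR(ŝ + ω·y) > SAR(ŝ); i.e., the observation-adding technique strictly improves the signal-to-artifact ratio. -/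
/-!
Adding `ω • y` with `y ∈ K` shifts the projection `P_K ŝ` by `ω • y` and leaves the artifact
`ŝ - P_K ŝ` untouched, so only the numerator of the SAR ratio changes. It grows because
`⟪P_K ŝ, y⟫ = ⟪ŝ, y⟫ > 0` (the artifact is orthogonal to `y`).
-/

open scoped RealInnerProductSpace

/-- Signal-to-artifact ratio: `SAR(x) = 10·log₁₀(‖P_K x‖² / ‖x − P_K x‖²)`. -/
noncomputable def SAR {E : Type*} [NormedAddCommGroup E] [InnerProductSpace ℝ E]
    (K : Submodule ℝ E) [CompleteSpace K] (x : E) : ℝ :=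
  10 * Real.logb 10 (‖(K.orthogonalProjectionOnto x : E)‖ ^ 2 /
    ‖x - (K.orthogonalProjectionOnto x : E)‖ ^ 2)

namespace Submodule

variable {𝕜 E : Type*} [RCLike 𝕜] [NormedAddCommGroup E] [InnerProductSpace 𝕜 E]
  (K : Submodule 𝕜 E) [K.HasOrthogonalProjection] {y : E}

theorem starProjection_add_smul_of_mem (hy : y ∈ K) (x : E) (c : 𝕜) :
    K.starProjection (x + c • y) = K.starProjection x + c • y := by
  rw [map_add, map_smul, K.starProjection_eq_self_iff.mpr hy]

theorem add_smul_sub_starProjection_of_mem (hy : y ∈ K) (x : E) (c : 𝕜) :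
    x + c • y - K.starProjection (x + c • y) = x - K.starProjection x := by
  rw [K.starProjection_add_smul_of_mem hy]
  abel

end Submodule

theorem sq_norm_lt_sq_norm_add_smul_of_inner_pos {F : Type*} [NormedAddCommGroup F]
    [InnerProductSpace ℝ F] {u v : F} {c : ℝ} (huv : 0 < ⟪u, v⟫) (hc : 0 < c) :
    ‖u‖ ^ 2 < ‖u + c • v‖ ^ 2 := by
  rw [norm_add_sq_real, real_inner_smul_right]
  linarith [mul_pos hc huv, sq_nonneg ‖c • v‖]

theorem SAR_lt_SAR_of_sub_starProjection_eq {E : Type*} [NormedAddCommGroup E] [InnerProductSpace ℝ E]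
    (K : Submodule ℝ E) [CompleteSpace K] {x x' : E}
    (hres : x' - K.starProjection x' = x - K.starProjection x)
    (hA : x - K.starProjection x ≠ 0) (hP : K.starProjection x ≠ 0)
    (hlt : ‖K.starProjection x‖ ^ 2 < ‖K.starProjection x'‖ ^ 2) :
    SAR K x < SAR K x' := by
  have hA_pos : 0 < ‖x - K.starProjection x‖ ^ 2 := by positivity
  have hP_pos : 0 < ‖K.starProjection x‖ ^ 2 := by positivity
  simp only [SAR, Submodule.coe_orthogonalProjectionOnto_apply, hres]
  have hratio := div_lt_div_of_pos_right hlt hA_pos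
  have hlogb := Real.logb_lt_logb (b := 10) (by norm_num) (div_pos hP_pos hA_pos) hratio
  linarith

theorem observation_adding_improves_SAR
    {E : Type*} [NormedAddCommGroup E] [InnerProductSpace ℝ E]
    (K : Submodule ℝ E) [CompleteSpace K]
    (y sHat : E) (hy : y ∈ K)
    (hP : (K.orthogonalProjectionOnto sHat : E) ≠ 0)
    (hA : sHat - (K.orthogonalProjectionOnto sHat : E) ≠ 0)
    (hpos : ⟪sHat, y⟫ > 0) :
    ∀ ω : ℝ, ω > 0 → SAR K (sHat + ω • y) > SAR K sHat := by
  intro ω hω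
  have hinner : ⟪K.starProjection sHat, y⟫ = ⟪sHat, y⟫ :=
    K.inner_orthogonalProjectionOnto_eq_of_mem_right ⟨y, hy⟩ sHat
  refine SAR_lt_SAR_of_sub_starProjection_eq K (K.add_smul_sub_starProjection_of_mem hy sHat ω) hA hP ?_
  rw [K.starProjection_add_smul_of_mem hy]
  exact sq_norm_lt_sq_norm_add_smul_of_inner_pos (hinner ▸ hpos) hω
end

section
/- Let E be a real inner product space, K a complete subspace of E with orthogonal projection P_K, and define for x ∈ E with P_K x ≠ 0 and x − P_K x ≠ 0 the signal-to-artifact ratio SAR(x) = 10·log₁₀(‖P_K x‖² / ‖x − P_K x‖²). Suppose y ∈ K, ŝ ∈ E with P_K ŝ ≠ 0 and ŝ − P_K ŝ ≠ 0, and ω ∈ ℝ is such that P_K ŝ + ω·y ≠ 0. Then the SAR improvement satisfies SAR(ŝ + ω·y) − SAR(ŝ) = 10·log₁₀( 1 + (ω²·‖y‖² + 2ω·⟨ŝ, y⟩) / ‖P_K ŝ‖² ). -/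
open scoped RealInnerProductSpace

/-!
Adding a multiple of `y ∈ K` moves only the projection onto `K`: `P_K(ŝ + ω y) = P_K ŝ + ω y`,
while the artifact `ŝ - P_K ŝ` is unchanged. The two SAR values therefore share their
denominator, their difference is `10·log₁₀(‖P_K ŝ + ω y‖² / ‖P_K ŝ‖²)`, and expanding the
square with `⟪P_K ŝ, y⟫ = ⟪ŝ, y⟫` gives the closed form.
-/

theorem Real.logb_div_sub_logb_div {b x y z : ℝ} (hx : x ≠ 0) (hy : y ≠ 0) (hz : z ≠ 0) :
    Real.logb b (x / z) - Real.logb b (y / z) = Real.logb b (x / y) := by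
  rw [Real.logb_div hx hz, Real.logb_div hy hz, Real.logb_div hx hy]
  ring

namespace Submodule

variable {E : Type*} [NormedAddCommGroup E] [InnerProductSpace ℝ E]
  (K : Submodule ℝ E) [K.HasOrthogonalProjection] {x y : E}

theorem orthogonalProjectionOnto_add_smul_of_mem (hy : y ∈ K) (ω : ℝ) :
    (K.orthogonalProjectionOnto (x + ω • y) : E) = K.orthogonalProjectionOnto x + ω • y := by
  rw [map_add, map_smul, K.orthogonalProjectionOnto_mem_subspace_eq_self ⟨y, hy⟩]
  rfl

theorem add_smul_sub_orthogonalProjectionOnto_of_mem (hy : y ∈ K) (ω : ℝ) :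
    x + ω • y - K.orthogonalProjectionOnto (x + ω • y) = x - K.orthogonalProjectionOnto x := by
  rw [K.orthogonalProjectionOnto_add_smul_of_mem hy, add_sub_add_right_eq_sub]

theorem norm_orthogonalProjectionOnto_add_smul_sq_of_mem (hy : y ∈ K) (ω : ℝ) :
    ‖(K.orthogonalProjectionOnto x : E) + ω • y‖ ^ 2 =
      ‖(K.orthogonalProjectionOnto x : E)‖ ^ 2 + (ω ^ 2 * ‖y‖ ^ 2 + 2 * ω * ⟪x, y⟫) := by
  have hinner : ⟪(K.orthogonalProjectionOnto x : E), y⟫ = ⟪x, y⟫ :=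
    K.inner_orthogonalProjectionOnto_eq_of_mem_right ⟨y, hy⟩ x
  rw [norm_add_sq_real, real_inner_smul_right, hinner, norm_smul, mul_pow, Real.norm_eq_abs,
    sq_abs]
  ring

end Submodule

theorem SAR_add_smul_sub_SAR {E : Type*} [NormedAddCommGroup E] [InnerProductSpace ℝ E]
    (K : Submodule ℝ E) [CompleteSpace K] {x y : E} (hy : y ∈ K) (ω : ℝ)
    (hP : (K.orthogonalProjectionOnto x : E) ≠ 0)
    (hA : x - (K.orthogonalProjectionOnto x : E) ≠ 0)
    (hω : (K.orthogonalProjectionOnto x : E) + ω • y ≠ 0) :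
    SAR K (x + ω • y) - SAR K x =
      10 * Real.logb 10 (‖(K.orthogonalProjectionOnto x : E) + ω • y‖ ^ 2 /
        ‖(K.orthogonalProjectionOnto x : E)‖ ^ 2) := by
  rw [SAR, SAR, K.add_smul_sub_orthogonalProjectionOnto_of_mem hy,
    K.orthogonalProjectionOnto_add_smul_of_mem hy, ← mul_sub,
    Real.logb_div_sub_logb_div (by positivity) (by positivity) (by positivity)]

/-- Closed-form SAR improvement of observation adding:
`SAR(ŝ + ω·y) − SAR(ŝ) = 10·log₁₀(1 + (ω²‖y‖² + 2ω⟨ŝ,y⟩)/‖P_K ŝ‖²)`. -/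
theorem SAR_improvement_closed_form
    {E : Type*} [NormedAddCommGroup E] [InnerProductSpace ℝ E]
    (K : Submodule ℝ E) [CompleteSpace K]
    (y sHat : E) (hy : y ∈ K)
    (hP : (K.orthogonalProjectionOnto sHat : E) ≠ 0)
    (hA : sHat - (K.orthogonalProjectionOnto sHat : E) ≠ 0)
    (ω : ℝ) (hω : (K.orthogonalProjectionOnto sHat : E) + ω • y ≠ 0) :
    SAR K (sHat + ω • y) - SAR K sHat =
      10 * Real.logb 10
        (1 + (ω ^ 2 * ‖y‖ ^ 2 + 2 * ω * ⟪sHat, y⟫) /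
          ‖(K.orthogonalProjectionOnto sHat : E)‖ ^ 2) := by
  have hP2 : ‖(K.orthogonalProjectionOnto sHat : E)‖ ^ 2 ≠ 0 := by positivity
  rw [SAR_add_smul_sub_SAR K hy ω hP hA hω, K.norm_orthogonalProjectionOnto_add_smul_sq_of_mem hy,
    add_div, div_self hP2]
end

section
/- Let E be a real inner product space, K a complete subspace of E with orthogonal projection P_K, and define for x ∈ E with P_K x ≠ 0 and x − P_K x ≠ 0 the signal-to-artifact ratio SAR(x) = 10·log₁₀(‖P_K x‖² / ‖x − P_K x‖²). Suppose y ∈ K with y ≠ 0, ŝ ∈ E with ŝ − P_K ŝ ≠ 0, and ⟨ŝ, y⟩ > 0. Then SAR(ŝ + ω·y) tends to +∞ as ω → +∞. -/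
/-! Adding `ω • y` with `y ∈ K` moves only the projection: `P_K (ŝ + ω • y) = P_K ŝ + ω • y`,
so the artifact `ŝ - P_K ŝ` is unchanged while the natural component grows without bound in
norm. The ratio inside the logarithm therefore tends to `+∞`. -/

open scoped RealInnerProductSpace

open Filter Bornology

theorem tendsto_const_add_smul_cobounded {𝕜 E : Type*} [NormedField 𝕜] [NormedAddCommGroup E]
    [NormedSpace 𝕜 E] (p : E) {y : E} (hy : y ≠ 0) :
    Tendsto (fun c : 𝕜 => p + c • y) (cobounded 𝕜) (cobounded E) := by
  have hsmul : Tendsto (fun c : 𝕜 => c • y) (cobounded 𝕜) (cobounded E) := by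
    rw [← tendsto_norm_atTop_iff_cobounded]
    simp_rw [norm_smul]
    exact tendsto_norm_cobounded_atTop.atTop_mul_const (norm_pos_iff.2 hy)
  exact (tendsto_const_add_cobounded p).comp hsmul

namespace Submodule

variable {𝕜 E : Type*} [RCLike 𝕜] [NormedAddCommGroup E] [InnerProductSpace 𝕜 E]
  (K : Submodule 𝕜 E) [K.HasOrthogonalProjection] {x y : E}

theorem starProjection_add_of_mem (hy : y ∈ K) :
    K.starProjection (x + y) = K.starProjection x + y := by
  rw [map_add, starProjection_eq_self_iff.2 hy]

theorem add_sub_starProjection_add_of_mem (hy : y ∈ K) :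
    x + y - K.starProjection (x + y) = x - K.starProjection x := by
  rw [K.starProjection_add_of_mem hy]
  abel

end Submodule

theorem tendsto_SAR_atTop {E α : Type*} [NormedAddCommGroup E] [InnerProductSpace ℝ E]
    (K : Submodule ℝ E) [CompleteSpace K] {l : Filter α} {x : α → E} {a : E} (ha : a ≠ 0)
    (hartifact : ∀ t, x t - K.starProjection (x t) = a)
    (hnatural : Tendsto (fun t => ‖K.starProjection (x t)‖) l atTop) :
    Tendsto (fun t => SAR K (x t)) l atTop := by
  have hratio : Tendsto (fun t => ‖K.starProjection (x t)‖ ^ 2 / ‖a‖ ^ 2) l atTop :=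
    ((tendsto_pow_atTop two_ne_zero).comp hnatural).atTop_div_const (by positivity)
  have hlog := (Real.tendsto_logb_atTop (by norm_num : (1 : ℝ) < 10)).comp hratio
  refine (hlog.const_mul_atTop (by norm_num : (0 : ℝ) < 10)).congr fun t => ?_
  simp only [SAR, Function.comp_apply, Submodule.coe_orthogonalProjectionOnto_apply, hartifact]

theorem SAR_tendsto_atTop_observation_adding_general
    {E : Type*} [NormedAddCommGroup E] [InnerProductSpace ℝ E]
    (K : Submodule ℝ E) [CompleteSpace K]
    (y sHat : E) (hy : y ∈ K) (hy0 : y ≠ 0)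
    (hA : sHat - (K.orthogonalProjectionOnto sHat : E) ≠ 0) :
    Filter.Tendsto (fun ω : ℝ => SAR K (sHat + ω • y)) Filter.atTop Filter.atTop := by
  refine tendsto_SAR_atTop K hA
    (fun ω => K.add_sub_starProjection_add_of_mem (K.smul_mem ω hy)) ?_
  simp_rw [K.starProjection_add_of_mem (K.smul_mem _ hy)]
  exact tendsto_norm_atTop_iff_cobounded.2
    ((tendsto_const_add_smul_cobounded _ hy0).mono_left IsOrderBornology.atTop_le_cobounded)

/-- `SAR(ŝ + ω·y) → +∞` as `ω → +∞`. -/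
theorem SAR_tendsto_atTop_observation_adding
    {E : Type*} [NormedAddCommGroup E] [InnerProductSpace ℝ E]
    (K : Submodule ℝ E) [CompleteSpace K]
    (y sHat : E) (hy : y ∈ K) (hy0 : y ≠ 0)
    (hA : sHat - (K.orthogonalProjectionOnto sHat : E) ≠ 0)
    (hpos : ⟪sHat, y⟫ > 0) :
    Filter.Tendsto (fun ω : ℝ => SAR K (sHat + ω • y)) Filter.atTop Filter.atTop :=
  SAR_tendsto_atTop_observation_adding_general K y sHat hy hy0 hA
end
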